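/- Let k ≥ 1 be a natural number (or a real number k > 0), let d ≥ 1, η > 0 and a > 0 be real, and set 𝒞 = d/η. Then ∫₀^∞ r^{d−1} (1 − γ(k, a r^η)/Γ(k)) dr = Γ(k + 𝒞) / (d · a^𝒞 · Γ(k)), where γ is the lower incomplete gamma function. -/

import Mathlib

open MeasureTheory

/-- The lower incomplete gamma function `γ(k, x) = ∫₀^x t^(k−1) e^(−t) dt`. -/
noncomputable def lowerIncompleteGamma (k x : ℝ) : ℝ :=
  ∫ t in (0 : ℝ)..x, t ^ (k - 1) * Real.exp (-t)

namespace DCAux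

open Set

noncomputable def f (k t : ℝ) : ℝ := t ^ (k - 1) * Real.exp (-t)

lemma f_meas (k : ℝ) : Measurable (f k) :=
  ((by measurability : Measurable fun t : ℝ => t ^ (k - 1))).mul
    (Real.measurable_exp.comp measurable_neg)

lemma f_nonneg {k t : ℝ} (ht : 0 ≤ t) : 0 ≤ f k t :=
  mul_nonneg (Real.rpow_nonneg ht _) (Real.exp_pos _).le

lemma f_intOn (k : ℝ) (hk : 0 < k) {x : ℝ} (hx : 0 ≤ x) :
    IntegrableOn (f k) (Ioi x) := by
  have h0 : IntegrableOn (f k) (Ioi 0) := by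
    have := Real.GammaIntegral_convergent hk
    refine this.congr_fun (fun t _ => ?_) measurableSet_Ioi |>.mono_set (subset_refl _)
    simp [f, mul_comm]
  exact h0.mono_set (Ioi_subset_Ioi hx)

lemma f_integral (k : ℝ) (hk : 0 < k) :
    ∫ t in Ioi (0:ℝ), f k t = Real.Gamma k := by
  rw [Real.Gamma_eq_integral hk]
  exact setIntegral_congr_fun measurableSet_Ioi (fun t _ => by simp [f, mul_comm])

lemma tail (k : ℝ) (hk : 0 < k) {x : ℝ} (hx : 0 ≤ x) :
    ∫ t in Ioi x, f k t = Real.Gamma k - lowerIncompleteGamma k x := by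
  have hsplit : ∫ t in Ioi (0:ℝ), f k t
      = (∫ t in Ioc (0:ℝ) x, f k t) + ∫ t in Ioi x, f k t := by
    rw [← setIntegral_union (Ioc_disjoint_Ioi le_rfl) measurableSet_Ioi
      ((f_intOn k hk le_rfl).mono_set Ioc_subset_Ioi_self) (f_intOn k hk hx),
      Ioc_union_Ioi_eq_Ioi hx]
  have hγ : lowerIncompleteGamma k x = ∫ t in Ioc (0:ℝ) x, f k t := by
    rw [lowerIncompleteGamma, intervalIntegral.integral_of_le hx]; rfl
  rw [f_integral k hk] at hsplit
  rw [hγ]; linarith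

section Key

variable {k d η a : ℝ} (hk : 0 < k) (hd : 1 ≤ d) (hη : 0 < η) (ha : 0 < a)

lemma key (hk : 0 < k) (hd : 1 ≤ d) (hη : 0 < η) (ha : 0 < a) :
    ∫ r in Ioi (0:ℝ), r ^ (d - 1) * ∫ t in Ioi (a * r ^ η), f k t
      = Real.Gamma (k + d / η) / (d * a ^ (d / η)) := by
  set 𝒞 : ℝ := d / η with h𝒞
  have hd0 : (0:ℝ) < d := lt_of_lt_of_le zero_lt_one hd
  have hC : 0 < 𝒞 := div_pos hd0 hη
  have hkC : 0 < k + 𝒞 := by linarith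
  -- the product-space integrand
  set S : Set (ℝ × ℝ) := {p | a * p.1 ^ η < p.2} with hS
  have hSmeas : MeasurableSet S := by
    apply measurableSet_lt
    · measurability
    · exact measurable_snd
  set F : ℝ × ℝ → ENNReal :=
    S.indicator (fun p => ENNReal.ofReal (p.1 ^ (d - 1) * f k p.2)) with hF
  have hFmeas : Measurable F := by
    apply Measurable.indicator _ hSmeas
    apply Measurable.ennreal_ofReal
    exact ((measurable_fst.pow_const _).mul ((f_meas k).comp measurable_snd))
  -- nonnegativity of the tail
  have nonneg_tail : ∀ {x : ℝ}, 0 ≤ x → 0 ≤ ∫ t in Ioi x, f k t := fun {x} hx =>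
    setIntegral_nonneg measurableSet_Ioi (fun t ht => f_nonneg (le_of_lt (lt_of_le_of_lt hx ht)))
  -- measurability of the integrand via antitonicity of the tail
  set h' : ℝ → ℝ := fun x => ∫ t in Ioi (max x 0), f k t with hh'
  have h'anti : Antitone h' := by
    intro x y hxy
    refine setIntegral_mono_set (f_intOn k hk (le_max_right x 0)) ?_ ?_
    · filter_upwards [ae_restrict_mem measurableSet_Ioi] with t ht
      exact f_nonneg (le_of_lt (lt_of_le_of_lt (le_max_right x 0) ht))
    · exact (Ioi_subset_Ioi (max_le_max hxy le_rfl)).eventuallyLE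
  have hmeas0 : Measurable fun r : ℝ => r ^ (d - 1) * h' (a * r ^ η) :=
    (by measurability : Measurable fun r : ℝ => r ^ (d - 1)).mul
      (h'anti.measurable.comp (by measurability))
  have haesm : AEStronglyMeasurable
      (fun r => r ^ (d - 1) * ∫ t in Ioi (a * r ^ η), f k t)
      (volume.restrict (Ioi (0:ℝ))) := by
    refine hmeas0.aestronglyMeasurable.congr ?_
    filter_upwards [ae_restrict_mem measurableSet_Ioi] with r hr
    have hmax : max (a * r ^ η) 0 = a * r ^ η :=
      max_eq_left (mul_pos ha (Real.rpow_pos_of_pos hr _)).le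
    simp only [hh', hmax]
  have step1 : (∫ r in Ioi (0:ℝ), r ^ (d - 1) * ∫ t in Ioi (a * r ^ η), f k t)
      = (∫⁻ r in Ioi (0:ℝ),
          ENNReal.ofReal (r ^ (d - 1) * ∫ t in Ioi (a * r ^ η), f k t)).toReal := by
    apply integral_eq_lintegral_of_nonneg_ae _ haesm
    filter_upwards [ae_restrict_mem measurableSet_Ioi] with r hr
    exact mul_nonneg (Real.rpow_nonneg hr.le _)
      (nonneg_tail (mul_pos ha (Real.rpow_pos_of_pos hr _)).le)
  have step2 : (∫⁻ r in Ioi (0:ℝ),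
        ENNReal.ofReal (r ^ (d - 1) * ∫ t in Ioi (a * r ^ η), f k t))
      = ∫⁻ r in Ioi (0:ℝ), ∫⁻ t in Ioi (0:ℝ), F (r, t) := by
    refine lintegral_congr_ae ?_
    filter_upwards [ae_restrict_mem measurableSet_Ioi] with r hr
    have hx : 0 < a * r ^ η := mul_pos ha (Real.rpow_pos_of_pos hr _)
    have hnn : 0 ≤ᵐ[volume.restrict (Ioi (a * r ^ η))] f k := by
      filter_upwards [ae_restrict_mem measurableSet_Ioi] with t ht
      exact f_nonneg (le_of_lt (lt_trans hx ht))
    have hfe : ∀ t : ℝ, F (r, t) = (Ioi (a * r ^ η)).indicator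
        (fun t => ENNReal.ofReal (r ^ (d - 1)) * ENNReal.ofReal (f k t)) t := by
      intro t
      by_cases ht : a * r ^ η < t
      · have h1 : (r, t) ∈ S := ht
        have h2 : t ∈ Ioi (a * r ^ η) := ht
        rw [hF, indicator_of_mem h1, indicator_of_mem h2,
          ENNReal.ofReal_mul (Real.rpow_nonneg hr.le _)]
      · have h1 : (r, t) ∉ S := ht
        have h2 : t ∉ Ioi (a * r ^ η) := ht
        rw [hF, indicator_of_notMem h1, indicator_of_notMem h2]
    calc ENNReal.ofReal (r ^ (d - 1) * ∫ t in Ioi (a * r ^ η), f k t)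
        = ENNReal.ofReal (r ^ (d - 1))
            * ENNReal.ofReal (∫ t in Ioi (a * r ^ η), f k t) :=
          ENNReal.ofReal_mul (Real.rpow_nonneg hr.le _)
      _ = ENNReal.ofReal (r ^ (d - 1))
            * ∫⁻ t in Ioi (a * r ^ η), ENNReal.ofReal (f k t) := by
          rw [ofReal_integral_eq_lintegral_ofReal (f_intOn k hk hx.le) hnn]
      _ = ∫⁻ t in Ioi (a * r ^ η),
            ENNReal.ofReal (r ^ (d - 1)) * ENNReal.ofReal (f k t) :=
          (lintegral_const_mul _ (f_meas k).ennreal_ofReal).symm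
      _ = ∫⁻ t in Ioi (0:ℝ), F (r, t) := by
          simp only [hfe]
          rw [lintegral_indicator measurableSet_Ioi,
            Measure.restrict_restrict measurableSet_Ioi, Ioi_inter_Ioi,
            sup_eq_left.2 hx.le]
  have hswap : (∫⁻ r in Ioi (0:ℝ), ∫⁻ t in Ioi (0:ℝ), F (r, t))
      = ∫⁻ t in Ioi (0:ℝ), ∫⁻ r in Ioi (0:ℝ), F (r, t) :=
    lintegral_lintegral_swap (by exact hFmeas.aemeasurable)
  have step3 : ∀ t ∈ Ioi (0:ℝ), (∫⁻ r in Ioi (0:ℝ), F (r, t))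
      = ENNReal.ofReal (f k t * (((t / a) ^ η⁻¹) ^ d / d)) := by
    intro t ht
    set R : ℝ := (t / a) ^ η⁻¹ with hRdef
    have hta : 0 < t / a := div_pos ht ha
    have hRpos : 0 < R := Real.rpow_pos_of_pos hta _
    have hRη : R ^ η = t / a := Real.rpow_inv_rpow hta.le hη.ne'
    have hcond : ∀ r : ℝ, 0 < r → (a * r ^ η < t ↔ r < R) := by
      intro r hr
      rw [mul_comm, ← lt_div_iff₀ ha, ← hRη,
        Real.rpow_lt_rpow_iff hr.le hRpos.le hη]
    have hfe : ∀ᵐ r ∂(volume.restrict (Ioi (0:ℝ))),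
        F (r, t) = (Iio R).indicator
          (fun r => ENNReal.ofReal (r ^ (d - 1) * f k t)) r := by
      filter_upwards [ae_restrict_mem measurableSet_Ioi] with r hr
      by_cases hc : r < R
      · have h1 : (r, t) ∈ S := (hcond r hr).2 hc
        rw [hF, indicator_of_mem h1, indicator_of_mem (show r ∈ Iio R from hc)]
      · have h1 : (r, t) ∉ S := fun h => hc ((hcond r hr).1 h)
        rw [hF, indicator_of_notMem h1, indicator_of_notMem (show r ∉ Iio R from hc)]
    have hint : IntegrableOn (fun r : ℝ => r ^ (d - 1) * f k t) (Ioo 0 R) := by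
      apply Integrable.mul_const
      have h1 := intervalIntegral.intervalIntegrable_rpow'
        (a := 0) (b := R) (by linarith : (-1:ℝ) < d - 1)
      rw [intervalIntegrable_iff] at h1
      exact h1.mono_set (by rw [uIoc_of_le hRpos.le]; exact Ioo_subset_Ioc_self)
    have hnn2 : 0 ≤ᵐ[volume.restrict (Ioo (0:ℝ) R)]
        fun r : ℝ => r ^ (d - 1) * f k t := by
      filter_upwards [ae_restrict_mem measurableSet_Ioo] with r hr
      exact mul_nonneg (Real.rpow_nonneg hr.1.le _) (f_nonneg ht.le)
    have hval : ∫ r in Ioo (0:ℝ) R, r ^ (d - 1) * f k t = R ^ d / d * f k t := by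
      rw [integral_mul_const]
      congr 1
      rw [← integral_Ioc_eq_integral_Ioo, ← intervalIntegral.integral_of_le hRpos.le,
        integral_rpow (Or.inl (by linarith : (-1:ℝ) < d - 1)),
        Real.zero_rpow (by linarith : d - 1 + 1 ≠ 0), sub_add_cancel, sub_zero]
    rw [lintegral_congr_ae hfe, lintegral_indicator measurableSet_Iio,
      Measure.restrict_restrict measurableSet_Iio, Iio_inter_Ioi,
      ← ofReal_integral_eq_lintegral_ofReal hint hnn2, hval, mul_comm]
  have step4 : (∫⁻ t in Ioi (0:ℝ),
        ENNReal.ofReal (f k t * (((t / a) ^ η⁻¹) ^ d / d)))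
      = ENNReal.ofReal (Real.Gamma (k + 𝒞) / (d * a ^ 𝒞)) := by
    have hcong : ∀ᵐ t ∂(volume.restrict (Ioi (0:ℝ))),
        ENNReal.ofReal (f k t * (((t / a) ^ η⁻¹) ^ d / d))
          = ENNReal.ofReal (f (k + 𝒞) t * (1 / (d * a ^ 𝒞))) := by
      filter_upwards [ae_restrict_mem measurableSet_Ioi] with t ht
      congr 1
      have hta : (0:ℝ) ≤ t / a := (div_pos ht ha).le
      have h1 : ((t / a) ^ η⁻¹) ^ d = t ^ 𝒞 / a ^ 𝒞 := by
        rw [← Real.rpow_mul hta, inv_mul_eq_div, ← h𝒞, Real.div_rpow ht.le ha.le]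
      have h2 : t ^ (k + 𝒞 - 1) = t ^ (k - 1) * t ^ 𝒞 := by
        rw [← Real.rpow_add ht]; ring_nf
      unfold f
      rw [h1, h2]
      have had : a ^ 𝒞 ≠ 0 := (Real.rpow_pos_of_pos ha _).ne'
      field_simp
    have hnn3 : 0 ≤ᵐ[volume.restrict (Ioi (0:ℝ))]
        fun t : ℝ => f (k + 𝒞) t * (1 / (d * a ^ 𝒞)) := by
      filter_upwards [ae_restrict_mem measurableSet_Ioi] with t ht
      exact mul_nonneg (f_nonneg ht.le) (by positivity)
    rw [lintegral_congr_ae hcong,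
      ← ofReal_integral_eq_lintegral_ofReal ((f_intOn (k + 𝒞) hkC le_rfl).mul_const _) hnn3,
      integral_mul_const, f_integral (k + 𝒞) hkC]
    congr 1
    ring
  rw [step1, step2, hswap, setLIntegral_congr_fun measurableSet_Ioi step3,
    step4, ENNReal.toReal_ofReal]
  exact div_nonneg (Real.Gamma_pos_of_pos hkC).le (by positivity)


end Key

end DCAux

/-- For real `k > 0`, `d ≥ 1`, `η > 0`, `a > 0` and `𝒞 = d/η`:
`∫₀^∞ r^(d−1) (1 − γ(k, a r^η)/Γ(k)) dr = Γ(k + 𝒞)/(d a^𝒞 Γ(k))`. -/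
theorem diversity_coding_connectivity_mass
    (k d η a 𝒞 : ℝ) (hk : 0 < k) (hd : 1 ≤ d) (hη : 0 < η) (ha : 0 < a)
    (h𝒞 : 𝒞 = d / η) :
    ∫ r in Set.Ioi (0 : ℝ),
        r ^ (d - 1) * (1 - lowerIncompleteGamma k (a * r ^ η) / Real.Gamma k)
      = Real.Gamma (k + 𝒞) / (d * a ^ 𝒞 * Real.Gamma k) := by
  have hΓ : 0 < Real.Gamma k := Real.Gamma_pos_of_pos hk
  have hcongr : ∀ r ∈ Set.Ioi (0:ℝ),
      r ^ (d - 1) * (1 - lowerIncompleteGamma k (a * r ^ η) / Real.Gamma k)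
        = (r ^ (d - 1) * ∫ t in Set.Ioi (a * r ^ η), DCAux.f k t) * (Real.Gamma k)⁻¹ := by
    intro r hr
    have hx : (0:ℝ) ≤ a * r ^ η :=
      (mul_pos ha (Real.rpow_pos_of_pos hr _)).le
    rw [DCAux.tail k hk hx]
    field_simp
  rw [setIntegral_congr_fun measurableSet_Ioi hcongr, integral_mul_const,
    DCAux.key hk hd hη ha, h𝒞]
  field_simp
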